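/- arXiv:1411.4177 — 5 statements merged into one kernel-verified Lean document; each statement's English description precedes it below -/
import Mathlib

section
/- Let G be the Klein four-group (ℤ/2ℤ) × (ℤ/2ℤ) and let t ∈ (0,1). Then the map Q_t : P(G) → P(G) is not surjective; more precisely, there is no μ ∈ P(G) with Q_t(μ) = δ_b, where b = (0,1). -/
/-!
If `Q_t(μ) = δ_b` then `1 - tμ` is invertible (otherwise `Ring.inverse` gives `Q_t(μ) = 0`),
and clearing the denominator gives `(1 - t)μ = δ_b (1 - tμ)`. Since `b = -b`, the coefficient
at `0` reads `(1 - t) μ(0) = -t μ(b)`, so positivity forces `μ(0) = μ(b) = 0`; but the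
coefficient at `b` reads `(1 - t) μ(b) = 1 - t μ(0)`, i.e. `0 = 1`.
-/

/-- The Klein four-group `(ℤ/2ℤ) × (ℤ/2ℤ)`. -/
abbrev Klein : Type := ZMod 2 × ZMod 2

/-- The rational map `Q_t(μ) = (1-t) μ (1 - tμ)⁻¹` in the group algebra `ℝ[G]` of the Klein
four-group. -/
noncomputable def Q (t : ℝ) (μ : AddMonoidAlgebra ℝ Klein) : AddMonoidAlgebra ℝ Klein :=
  (1 - t) • (μ * Ring.inverse (1 - t • μ))

namespace AddMonoidAlgebra

theorem smul_ne_single_mul_one_sub_smul {k G : Type*} [Ring k] [LinearOrder k]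
    [IsStrictOrderedRing k] [AddGroup G] {b : G} (hbb : b + b = 0) (hb : b ≠ 0) {t : k}
    (ht0 : 0 < t) (ht1 : t < 1) {μ : AddMonoidAlgebra k G} (hμ : ∀ x, 0 ≤ μ.coeff x) :
    (1 - t) • μ ≠ single b 1 * (1 - t • μ) := by
  intro h
  have hneg : -b = b := neg_eq_of_add_eq_zero_left hbb
  have at_zero : (1 - t) * μ.coeff 0 + t * μ.coeff b = 0 := by
    have := congrArg (coeff · 0) h
    simp only [coeff_smul_apply, smul_eq_mul, coeff_single_mul_apply, hneg, add_zero, one_mul,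
      coeff_sub, Finsupp.sub_apply, one_def, coeff_single, Finsupp.single_eq_of_ne hb, zero_sub]
      at this
    exact eq_neg_iff_add_eq_zero.1 this
  have at_b : (1 - t) * μ.coeff b = 1 - t * μ.coeff 0 := by
    have := congrArg (coeff · b) h
    simpa only [coeff_smul_apply, smul_eq_mul, coeff_single_mul_apply, hneg, hbb, one_mul,
      coeff_sub, Finsupp.sub_apply, one_def, coeff_single, Finsupp.single_eq_same] using this
  obtain ⟨h0, hb'⟩ := (add_eq_zero_iff_of_nonneg (mul_nonneg (sub_nonneg.2 ht1.le) (hμ 0))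
    (mul_nonneg ht0.le (hμ b))).1 at_zero
  have hμ0 : μ.coeff 0 = 0 := (mul_eq_zero.1 h0).resolve_left (sub_ne_zero.2 ht1.ne')
  have hμb : μ.coeff b = 0 := (mul_eq_zero.1 hb').resolve_left ht0.ne'
  simp [hμ0, hμb] at at_b

end AddMonoidAlgebra

open AddMonoidAlgebra

theorem Q_mul_one_sub_smul {t : ℝ} {μ : AddMonoidAlgebra ℝ Klein}
    (hu : IsUnit (1 - t • μ)) : Q t μ * (1 - t • μ) = (1 - t) • μ := by
  rw [Q, smul_mul_assoc, mul_assoc, Ring.inverse_mul_cancel _ hu, mul_one]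

theorem Q_eq_zero_of_not_isUnit {t : ℝ} {μ : AddMonoidAlgebra ℝ Klein}
    (hu : ¬ IsUnit (1 - t • μ)) : Q t μ = 0 := by
  rw [Q, Ring.inverse_non_unit _ hu, mul_zero, smul_zero]

/-- For the Klein four-group `G = (ℤ/2ℤ) × (ℤ/2ℤ)` and `t ∈ (0,1)`, the map
`Q_t : P(G) → P(G)` is not surjective: there is no `μ ∈ P(G)` with `Q_t(μ) = δ_b`, where
`b = (0,1)`. -/
theorem Qt_not_surjective_klein (t : ℝ) (ht : t ∈ Set.Ioo (0 : ℝ) 1) :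
    ¬ ∃ μ : AddMonoidAlgebra ℝ Klein,
        (∀ x : Klein, 0 ≤ μ.coeff x) ∧ (∑ x : Klein, μ.coeff x = 1) ∧
        Q t μ = AddMonoidAlgebra.single ((0 : ZMod 2), (1 : ZMod 2)) (1 : ℝ) := by
  rintro ⟨μ, hμ, -, hQ⟩
  by_cases hu : IsUnit (1 - t • μ)
  · refine smul_ne_single_mul_one_sub_smul (b := ((0 : ZMod 2), (1 : ZMod 2)))
      (by decide) (by decide) ht.1 ht.2 hμ ?_
    rw [← hQ, Q_mul_one_sub_smul hu]
  · rw [Q_eq_zero_of_not_isUnit hu] at hQ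
    exact one_ne_zero (single_eq_zero.1 hQ.symm)
end

section
/- Let G be a compact metrizable abelian topological group, μ a Borel probability measure on G, (t_k) a sequence in [0,1) with t_k → 1, and suppose Q_{t_k}(μ) converges to a Borel probability measure ν in the topology of weak convergence of probability measures. Then ν*μ = ν, i.e., ν solves the Choquet–Deny equation for μ. -/
/-!
Write `P f (x) = ∫ f(xy) dμ(y)`, so that `∫ P f dσ = ∫ f d(σ * μ)`. Shifting the geometric series
defining `Q_t(μ)` by one index gives the resolvent identity
`t ∫ P f dQ_t(μ) + (1 - t) ∫ f dμ = ∫ f dQ_t(μ)`. Letting `t = t_k → 1` kills the term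
`(1 - t) ∫ f dμ`, hence `∫ f d(ν * μ) = ∫ P f dν = ∫ f dν` for every bounded continuous `f`, and
bounded continuous functions separate finite Borel measures on a metrizable space.
-/

open MeasureTheory Filter

/-- `convPow μ n = μ^{*(n+1)}`, the `(n+1)`-fold convolution power of `μ`. -/
noncomputable def convPow {G : Type*} [CommGroup G] [MeasurableSpace G]
    (μ : Measure G) : ℕ → Measure G
  | 0 => μ
  | n + 1 => (convPow μ n).mconv μ

/-- The rational map `Q_t(μ) = (1-t) Σ_{n=0}^∞ t^n μ^{*(n+1)}`. -/
noncomputable def Qt {G : Type*} [CommGroup G] [MeasurableSpace G]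
    (t : ℝ) (μ : Measure G) : Measure G :=
  Measure.sum (fun n : ℕ => ENNReal.ofReal ((1 - t) * t ^ n) • convPow μ n)

open scoped Topology BoundedContinuousFunction

section MarkovOperator

variable {M : Type*} [Monoid M] [TopologicalSpace M] [ContinuousMul M] [FirstCountableTopology M]
  [MeasurableSpace M] [OpensMeasurableSpace M] (μ : Measure M) [IsProbabilityMeasure μ]

lemma continuous_integral_comp_mul_right (f : M →ᵇ ℝ) :
    Continuous fun x => ∫ y, f (x * y) ∂μ :=
  continuous_of_dominated (bound := fun _ => ‖f‖)
    (fun x => (f.continuous.comp (continuous_const_mul x)).aestronglyMeasurable)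
    (fun _ => .of_forall fun _ => f.norm_coe_le_norm _) (integrable_const _)
    (.of_forall fun y => f.continuous.comp (continuous_mul_const y))

noncomputable def markovOperator (f : M →ᵇ ℝ) : M →ᵇ ℝ :=
  .ofNormedAddCommGroup _ (continuous_integral_comp_mul_right μ f) ‖f‖ fun x => by
    simpa using norm_integral_le_of_norm_le_const (μ := μ) (C := ‖f‖)
      (.of_forall fun y => f.norm_coe_le_norm (x * y))

lemma integral_markovOperator [MeasurableMul₂ M] (σ : Measure M) [IsFiniteMeasure σ]
    (f : M →ᵇ ℝ) : ∫ x, markovOperator μ f x ∂σ = ∫ x, f x ∂(σ ∗ₘ μ) :=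
  (integral_mconv (f.integrable _)).symm

end MarkovOperator

section RationalMap

variable {G : Type*} [CommGroup G] [MeasurableSpace G] (μ : Measure G) [IsProbabilityMeasure μ]
  {s : ℝ}

instance isProbabilityMeasure_convPow [MeasurableMul₂ G] (n : ℕ) :
    IsProbabilityMeasure (convPow μ n) := by
  induction n with
  | zero => exact (inferInstance : IsProbabilityMeasure μ)
  | succ n ih => exact Measure.probabilitymeasure_of_probabilitymeasures_mconv _ _

lemma isProbabilityMeasure_Qt [MeasurableMul₂ G] (hs : s ∈ Set.Ico (0 : ℝ) 1) :
    IsProbabilityMeasure (Qt s μ) := by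
  have hgeom : HasSum (fun n : ℕ => (1 - s) * s ^ n) 1 := by
    simpa [mul_inv_cancel₀ (sub_ne_zero.2 hs.2.ne')] using
      (hasSum_geometric_of_lt_one hs.1 hs.2).mul_left (1 - s)
  constructor
  simp only [Qt, Measure.sum_apply _ MeasurableSet.univ, Measure.smul_apply, measure_univ,
    smul_eq_mul, mul_one]
  rw [← ENNReal.ofReal_tsum_of_nonneg (fun n => by nlinarith [pow_nonneg hs.1 n, hs.2])
    hgeom.summable, hgeom.tsum_eq, ENNReal.ofReal_one]

variable [TopologicalSpace G] [OpensMeasurableSpace G] [MeasurableMul₂ G]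

lemma hasSum_integral_Qt (hs : s ∈ Set.Ico (0 : ℝ) 1) (f : G →ᵇ ℝ) :
    HasSum (fun n => (1 - s) * s ^ n * ∫ x, f x ∂(convPow μ n)) (∫ x, f x ∂(Qt s μ)) := by
  have := isProbabilityMeasure_Qt μ hs
  refine (hasSum_integral_measure (f.integrable (Qt s μ))).congr_fun fun n => ?_
  rw [integral_smul_measure, ENNReal.toReal_ofReal
    (by nlinarith [pow_nonneg hs.1 n, hs.2] : 0 ≤ (1 - s) * s ^ n), smul_eq_mul]

lemma integral_Qt_resolvent [ContinuousMul G] [FirstCountableTopology G]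
    (hs : s ∈ Set.Ico (0 : ℝ) 1) (f : G →ᵇ ℝ) :
    s * ∫ x, markovOperator μ f x ∂(Qt s μ) + (1 - s) * ∫ x, f x ∂μ = ∫ x, f x ∂(Qt s μ) := by
  have hP := (hasSum_integral_Qt μ hs (markovOperator μ f)).mul_left s
  simp only [integral_markovOperator] at hP
  have hf := (hasSum_nat_add_iff' 1).2 (hasSum_integral_Qt μ hs f)
  have hshift : (fun n => s * ((1 - s) * s ^ n * ∫ x, f x ∂(convPow μ n ∗ₘ μ))) =
      fun n => (1 - s) * s ^ (n + 1) * ∫ x, f x ∂(convPow μ (n + 1)) := by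
    funext n
    rw [convPow]
    ring
  rw [hshift] at hP
  rw [hP.unique hf]
  simp [convPow]

end RationalMap

/-- Let `G` be a compact metrizable abelian topological group, `μ` a Borel
probability measure, `(t_k)` a sequence in `[0,1)` with `t_k → 1`, and suppose `Q_{t_k}(μ)`
converges weakly (i.e. the integrals of every bounded continuous function converge) to a Borel
probability measure `ν`. Then `ν * μ = ν`. -/
theorem weak_limit_solves_choquet_deny {G : Type*} [CommGroup G] [TopologicalSpace G]
    [IsTopologicalGroup G] [CompactSpace G] [TopologicalSpace.MetrizableSpace G]
    [MeasurableSpace G] [BorelSpace G]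
    (μ ν : Measure G) [IsProbabilityMeasure μ] [IsProbabilityMeasure ν]
    (t : ℕ → ℝ) (ht : ∀ k, t k ∈ Set.Ico (0 : ℝ) 1)
    (htlim : Tendsto t atTop (nhds 1))
    (hconv : ∀ f : BoundedContinuousFunction G ℝ,
      Tendsto (fun k => ∫ x, f x ∂(Qt (t k) μ)) atTop (nhds (∫ x, f x ∂ν))) :
    ν.mconv μ = ν := by
  refine ext_of_forall_integral_eq_of_IsFiniteMeasure fun f => ?_
  rw [← integral_markovOperator]
  have hlim : Tendsto
      (fun k => t k * ∫ x, markovOperator μ f x ∂(Qt (t k) μ) + (1 - t k) * ∫ x, f x ∂μ) atTop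
      (𝓝 (1 * ∫ x, markovOperator μ f x ∂ν + (1 - 1) * ∫ x, f x ∂μ)) :=
    (htlim.mul (hconv _)).add ((tendsto_const_nhds.sub htlim).mul tendsto_const_nhds)
  rw [one_mul, sub_self, zero_mul, add_zero] at hlim
  exact tendsto_nhds_unique (hlim.congr fun k => integral_Qt_resolvent μ (ht k) f) (hconv f)
end

section
/- Let G be a compact Hausdorff abelian topological group and let μ, λ be Borel probability measures on G such that μ(U) > 0 for every nonempty open set U ⊆ G and μ*λ = λ. Then λ is translation invariant: δ_g * λ = λ for every g ∈ G (equivalently λ(gA) = λ(A) for every g ∈ G and every Borel set A), i.e., λ is a Haar probability measure on G. -/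
open MeasureTheory Measure Filter BoundedContinuousFunction

/-!
A continuous `μ`-harmonic function `F` on a compact group (`F g = ∫ F (g * x) dμ(x)`) is constant:
at a minimum point `g₀` the integrand `F (g₀ * x) - F g₀` is nonnegative with integral zero, so it
vanishes `μ`-a.e., hence everywhere because `μ` charges every nonempty open set. For a continuous
`f` and a `μ`-stationary `λ`, the function `g ↦ ∫ f (g * x) dλ(x)` is such a harmonic function,
so `λ` integrates continuous functions translation-invariantly. Integrating this identity against
the Haar probability measure and swapping the integrals shows that `λ` and Haar measure integrate
continuous functions alike. They then agree on compact zero sets `f ⁻¹' {1}`, and Halmos'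
theorem (Haar measure is inner regular for such sets) yields `λ = Haar`.
-/

section ProductMeasurability

variable {X Y : Type*} [TopologicalSpace X] [TopologicalSpace Y] [CompactSpace X] [CompactSpace Y]
  [T35Space X] [T35Space Y] [MeasurableSpace X] [MeasurableSpace Y]
  [OpensMeasurableSpace X] [OpensMeasurableSpace Y]

/-- Without second countability the Borel σ-algebra of `X × Y` may exceed the product σ-algebra;
by Stone–Weierstrass, continuous functions are nevertheless measurable for the latter. -/
theorem Continuous.stronglyMeasurable_of_compactSpace_prod {f : X × Y → ℝ} (hf : Continuous f) :
    StronglyMeasurable f := by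
  let A : Subalgebra ℝ C(X × Y, ℝ) :=
    { carrier := {ψ | StronglyMeasurable ψ}
      mul_mem' := fun ha hb => ha.mul hb
      add_mem' := fun ha hb => ha.add hb
      algebraMap_mem' := fun _ => stronglyMeasurable_const }
  have hsep : A.SeparatesPoints := by
    intro p q hpq
    rcases not_and_or.1 (mt Prod.ext_iff.2 hpq) with h | h
    · obtain ⟨φ, hφ, hφpq⟩ := separatesPoints_continuous_of_t35Space h
      exact ⟨_, ⟨⟨fun z => φ z.1, hφ.comp continuous_fst⟩,
        (hφ.measurable.comp measurable_fst).stronglyMeasurable, rfl⟩, hφpq⟩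
    · obtain ⟨φ, hφ, hφpq⟩ := separatesPoints_continuous_of_t35Space h
      exact ⟨_, ⟨⟨fun z => φ z.2, hφ.comp continuous_snd⟩,
        (hφ.measurable.comp measurable_snd).stronglyMeasurable, rfl⟩, hφpq⟩
  obtain ⟨ψ, hψA, hψf⟩ := mem_closure_iff_seq_limit.1
    (ContinuousMap.continuousMap_mem_subalgebra_closure_of_separatesPoints A hsep ⟨f, hf⟩)
  exact stronglyMeasurable_of_tendsto atTop hψA
    (tendsto_pi_nhds.2 fun z => (continuous_eval_const z).tendsto _ |>.comp hψf)

end ProductMeasurability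

theorem continuous_parametric_integral_of_compactSpace {X Y : Type*} [TopologicalSpace X]
    [TopologicalSpace Y] [CompactSpace Y] [MeasurableSpace Y] [BorelSpace Y]
    (ν : Measure Y) [IsFiniteMeasure ν] {f : X → Y → ℝ} (hf : Continuous (Function.uncurry f)) :
    Continuous fun x => ∫ y, f x y ∂ν := by
  let Φ : C(X, C(Y, ℝ)) := ContinuousMap.curry ⟨_, hf⟩
  have hΦ : (fun x => ∫ y, f x y ∂ν) = fun x => ∫ y, ContinuousMap.toLp 1 ν ℝ (Φ x) y ∂ν :=
    funext fun x => (integral_congr_ae (ContinuousMap.coeFn_toLp ν (Φ x))).symm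
  rw [hΦ]
  exact continuous_integral.comp ((ContinuousMap.toLp 1 ν ℝ).continuous.comp Φ.continuous)

theorem measure_preimage_eq_of_forall_integral_eq {X : Type*} [TopologicalSpace X]
    [MeasurableSpace X] [OpensMeasurableSpace X] {ν₁ ν₂ : Measure X}
    [IsFiniteMeasure ν₁] [IsFiniteMeasure ν₂] (h : ∀ φ : X →ᵇ ℝ, ∫ x, φ x ∂ν₁ = ∫ x, φ x ∂ν₂)
    {f : X → ℝ} (hf : Continuous f) {s : Set ℝ} (hs : MeasurableSet s) :
    ν₁ (f ⁻¹' s) = ν₂ (f ⁻¹' s) := by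
  have hmap : ν₁.map f = ν₂.map f := ext_of_forall_integral_eq_of_IsFiniteMeasure fun ψ => by
    rw [integral_map hf.aemeasurable ψ.continuous.aestronglyMeasurable,
      integral_map hf.aemeasurable ψ.continuous.aestronglyMeasurable]
    exact h (ψ.compContinuous ⟨f, hf⟩)
  rw [← map_apply hf.measurable hs, hmap, map_apply hf.measurable hs]

theorem eq_const_of_integral_eq_of_forall_le {X : Type*} [TopologicalSpace X] [MeasurableSpace X]
    {μ : Measure X} [IsProbabilityMeasure μ] [μ.IsOpenPosMeasure] {φ : X → ℝ} {c : ℝ}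
    (hφ : Continuous φ) (hint : Integrable φ μ) (hle : ∀ x, c ≤ φ x)
    (heq : ∫ x, φ x ∂μ = c) : φ = fun _ => c := by
  have hzero : ∫ x, (φ x - c) ∂μ = 0 := by
    rw [integral_sub hint (integrable_const c), heq, integral_const, probReal_univ, one_smul,
      sub_self]
  have hae : (fun x => φ x - c) =ᵐ[μ] 0 :=
    (integral_eq_zero_iff_of_nonneg (fun x => sub_nonneg.2 (hle x))
      (hint.sub (integrable_const c))).1 hzero
  have hae' : φ =ᵐ[μ] fun _ => c := hae.mono fun x hx => sub_eq_zero.1 hx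
  exact (hφ.ae_eq_iff_eq μ continuous_const).1 hae'

section Convolution

variable {M : Type*} [Monoid M] [MeasurableSpace M]

/-- `Measure.map` is `0` along a map that is not a.e.-measurable, so a nonzero convolution certifies
the a.e.-measurability of multiplication, which is not automatic when `M × M` carries the product
of Borel σ-algebras. -/
theorem aemeasurable_mul_prod_of_mconv_ne_zero {μ ν : Measure M} (h : μ ∗ₘ ν ≠ 0) :
    AEMeasurable (fun p : M × M => p.1 * p.2) (μ.prod ν) := by
  contrapose! h
  exact map_of_not_aemeasurable h

theorem integral_mconv_of_ne_zero {E : Type*} [NormedAddCommGroup E] [NormedSpace ℝ E]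
    {μ ν : Measure M} [SFinite μ] [SFinite ν] (h : μ ∗ₘ ν ≠ 0) {f : M → E}
    (hf : Integrable f (μ ∗ₘ ν)) :
    ∫ z, f z ∂(μ ∗ₘ ν) = ∫ x, ∫ y, f (x * y) ∂ν ∂μ := by
  have hmul := aemeasurable_mul_prod_of_mconv_ne_zero h
  rw [mconv, integral_map hmul hf.aestronglyMeasurable]
  exact integral_prod _ (hf.comp_aemeasurable hmul)

theorem dirac_mconv_eq_map [MeasurableSingletonClass M] [MeasurableMul M] (g : M)
    (ν : Measure M) [SFinite ν] : dirac g ∗ₘ ν = ν.map (g * ·) := by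
  have hmul : AEMeasurable (fun p : M × M => p.1 * p.2) (ν.map (Prod.mk g)) :=
    (measurableEmbedding_prodMk_left g).aemeasurable_map_iff.2
      (measurable_const_mul g).aemeasurable
  rw [mconv, dirac_prod, hmul.map_map_of_aemeasurable measurable_prodMk_left.aemeasurable]
  rfl

end Convolution

section Harmonic

variable {G : Type*} [Group G] [TopologicalSpace G] [IsTopologicalGroup G] [CompactSpace G]
  [MeasurableSpace G] [BorelSpace G]

def IsMulHarmonic (μ : Measure G) (F : G → ℝ) : Prop :=
  ∀ g, F g = ∫ x, F (g * x) ∂μ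

theorem IsMulHarmonic.apply_eq_apply_of_continuous {μ : Measure G} [IsProbabilityMeasure μ]
    [μ.IsOpenPosMeasure] {F : G → ℝ} (hF : IsMulHarmonic μ F) (hc : Continuous F) (g h : G) :
    F g = F h := by
  obtain ⟨g₀, -, hg₀⟩ := isCompact_univ.exists_isMinOn Set.univ_nonempty hc.continuousOn
  have hcont : Continuous fun x => F (g₀ * x) := hc.comp (continuous_const_mul g₀)
  have hconst : (fun x => F (g₀ * x)) = fun _ => F g₀ :=
    eq_const_of_integral_eq_of_forall_le hcont
      (hcont.integrable_of_hasCompactSupport (.of_compactSpace _))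
      (fun x => hg₀ (Set.mem_univ _)) (hF g₀).symm
  have key : ∀ y, F y = F g₀ := fun y => by
    simpa using congrFun hconst (g₀⁻¹ * y)
  rw [key g, key h]

theorem isMulHarmonic_integral_mul_left {μ ν : Measure G} [SFinite μ] [IsFiniteMeasure ν]
    [NeZero ν] (hfix : μ ∗ₘ ν = ν) (f : C(G, ℝ)) :
    IsMulHarmonic μ fun g => ∫ x, f (g * x) ∂ν := by
  intro g
  have hint : Integrable (fun z => f (g * z)) (μ ∗ₘ ν) := by
    rw [hfix]
    exact (f.continuous.comp (continuous_const_mul g)).integrable_of_hasCompactSupport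
      (.of_compactSpace _)
  calc ∫ z, f (g * z) ∂ν = ∫ z, f (g * z) ∂(μ ∗ₘ ν) := by rw [hfix]
    _ = ∫ x, ∫ y, f (g * (x * y)) ∂ν ∂μ :=
      integral_mconv_of_ne_zero (hfix.symm ▸ NeZero.ne ν) hint
    _ = ∫ x, ∫ y, f (g * x * y) ∂ν ∂μ := by simp only [mul_assoc]

theorem integral_mul_left_eq_of_mconv_eq {μ ν : Measure G} [IsProbabilityMeasure μ]
    [μ.IsOpenPosMeasure] [IsProbabilityMeasure ν] (hfix : μ ∗ₘ ν = ν) (f : C(G, ℝ)) (g : G) :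
    ∫ x, f (g * x) ∂ν = ∫ x, f x ∂ν := by
  have hc : Continuous fun g => ∫ x, f (g * x) ∂ν :=
    continuous_parametric_integral_of_compactSpace ν (f.continuous.comp continuous_mul)
  simpa using (isMulHarmonic_integral_mul_left hfix f).apply_eq_apply_of_continuous hc g 1

end Harmonic

section Haar

variable {G : Type*} [Group G] [TopologicalSpace G] [IsTopologicalGroup G] [CompactSpace G]
  [T2Space G] [MeasurableSpace G] [BorelSpace G]

theorem integral_eq_of_forall_integral_mul_left_eq (ν η : Measure G) [IsProbabilityMeasure ν]
    [IsProbabilityMeasure η] [η.IsMulRightInvariant] {f : C(G, ℝ)}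
    (hinv : ∀ g, ∫ x, f (g * x) ∂ν = ∫ x, f x ∂ν) :
    ∫ x, f x ∂ν = ∫ x, f x ∂η := by
  have hint : Integrable (Function.uncurry fun g x => f (g * x)) (η.prod ν) :=
    .of_bound ((f.continuous.comp continuous_mul).stronglyMeasurable_of_compactSpace_prod
      |>.aestronglyMeasurable) ‖f‖ (ae_of_all _ fun _ => f.norm_coe_le_norm _)
  calc ∫ x, f x ∂ν = ∫ g, ∫ x, f (g * x) ∂ν ∂η := by
        simp only [hinv, integral_const, probReal_univ, one_smul]
    _ = ∫ x, ∫ g, f (g * x) ∂η ∂ν := integral_integral_swap hint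
    _ = ∫ x, f x ∂η := by
        simp only [integral_mul_right_eq_self, integral_const, probReal_univ, one_smul]

theorem eq_of_forall_integral_eq_of_isMulLeftInvariant (ν η : Measure G) [IsProbabilityMeasure ν]
    [IsProbabilityMeasure η] [η.IsMulLeftInvariant] [η.InnerRegularCompactLTTop]
    (h : ∀ f : C(G, ℝ), ∫ x, f x ∂ν = ∫ x, f x ∂η) : ν = η := by
  refine (eq_of_le_of_isProbabilityMeasure (le_iff.2 fun s hs => ?_)).symm
  refine le_of_forall_lt fun r hr => ?_
  obtain ⟨-, hsub, ⟨f, hf, -, rfl⟩, hr⟩ :=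
    innerRegularWRT_preimage_one_hasCompactSupport_measure_ne_top_of_group
      ⟨hs, measure_ne_top η s⟩ r hr
  calc r < η (f ⁻¹' {1}) := hr
    _ = ν (f ⁻¹' {1}) := (measure_preimage_eq_of_forall_integral_eq
        (fun φ => h φ.toContinuousMap) hf (measurableSet_singleton 1)).symm
    _ ≤ ν s := measure_mono hsub

end Haar

/-- Let `G` be a compact Hausdorff abelian topological group and `μ, λ` Borel
probability measures with `μ(U) > 0` for every nonempty open `U` and `μ * λ = λ`. Then `λ` is
translation invariant: `δ_g * λ = λ` for every `g` (equivalently `λ(g⁻¹A) = λ(A)` for all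
Borel `A`), i.e. `λ` is a Haar probability measure. -/
theorem choquet_deny_is_haar {G : Type*} [CommGroup G] [TopologicalSpace G]
    [IsTopologicalGroup G] [CompactSpace G] [T2Space G] [MeasurableSpace G] [BorelSpace G]
    (μ l : Measure G) [IsProbabilityMeasure μ] [IsProbabilityMeasure l]
    (hμpos : ∀ U : Set G, IsOpen U → U.Nonempty → 0 < μ U)
    (hfix : μ.mconv l = l) :
    ∀ g : G, (Measure.dirac g).mconv l = l ∧ l.map (fun x => g * x) = l := by
  intro g
  let η := haarMeasure (⊤ : TopologicalSpace.PositiveCompacts G)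
  have : IsProbabilityMeasure η :=
    ⟨by simpa using haarMeasure_self (K₀ := (⊤ : TopologicalSpace.PositiveCompacts G))⟩
  have : μ.IsOpenPosMeasure := ⟨fun U hU hne => (hμpos U hU hne).ne'⟩
  have hl : l = η := eq_of_forall_integral_eq_of_isMulLeftInvariant l η fun f =>
    integral_eq_of_forall_integral_mul_left_eq l η (integral_mul_left_eq_of_mconv_eq hfix f)
  have hmap : l.map (g * ·) = l := by
    rw [hl]
    exact map_mul_left_eq_self η g
  exact ⟨(dirac_mconv_eq_map g l).trans hmap, hmap⟩
end

section
/- Let G be a compact Hausdorff abelian topological group and t ∈ (0,1). A Borel probability measure μ on G satisfies Q_t(μ) = μ if and only if μ is idempotent for convolution, i.e., μ*μ = μ. Hence the fixed-point set of Q_t is exactly the set of idempotent probability measures. -/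
/-!
Splitting off the first term of the series gives `Q_t(μ) = (1-t) μ + t (Q_t(μ) ∗ μ)`.
If `Q_t(μ) = μ` this reads `μ = (1-t) μ + t (μ ∗ μ)`, and cancelling the finite measure
`(1-t) μ` leaves `μ ∗ μ = μ`. Conversely, if `μ ∗ μ = μ` then every convolution power is `μ`
and the weights `(1-t) tⁿ` sum to `1`.
-/

open MeasureTheory

open scoped ENNReal

namespace MeasureTheory.Measure

variable {α : Type*} [MeasurableSpace α]

theorem sum_mconv {M : Type*} [Monoid M] [MeasurableSpace M] {ι : Type*} (m : ι → Measure M)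
    (ν : Measure M) [SFinite ν]
    (hmul : AEMeasurable (fun p : M × M ↦ p.1 * p.2) ((Measure.sum m).prod ν)) :
    Measure.sum m ∗ₘ ν = Measure.sum (fun i ↦ m i ∗ₘ ν) := by
  rw [prod_sum_left] at hmul
  rw [mconv, prod_sum_left, map_sum hmul]
  rfl

theorem sum_smul_const {ι : Type*} (c : ι → ℝ≥0∞) (μ : Measure α) :
    Measure.sum (fun i ↦ c i • μ) = (∑' i, c i) • μ := by
  ext s hs
  simp only [sum_apply _ hs, smul_apply, smul_eq_mul, ENNReal.tsum_mul_right]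

theorem eq_of_eq_smul_add_smul {μ ν : Measure α} [IsFiniteMeasure μ] {a b : ℝ≥0∞}
    (hab : a + b = 1) (hb : b ≠ 0) (h : μ = a • μ + b • ν) : ν = μ := by
  have hb_top : b ≠ ∞ := ne_top_of_le_ne_top ENNReal.one_ne_top (hab ▸ le_add_self)
  ext s hs
  have hs_eq : a * μ s + b * ν s = a * μ s + b * μ s := by
    rw [← add_mul, hab, one_mul]
    simpa using (congrArg (· s) h).symm
  have hfin : a * μ s ≠ ∞ :=
    ENNReal.mul_ne_top (ne_top_of_le_ne_top ENNReal.one_ne_top (hab ▸ le_self_add))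
      (measure_ne_top μ s)
  exact (ENNReal.mul_right_inj hb hb_top).mp ((ENNReal.add_right_inj hfin).mp hs_eq)

end MeasureTheory.Measure

open Measure

section

variable {G : Type*} [CommGroup G] [MeasurableSpace G]

theorem convPow_eq_self_of_mconv_self {μ : Measure G} (h : μ ∗ₘ μ = μ) : ∀ n, convPow μ n = μ
  | 0 => rfl
  | n + 1 => by rw [convPow, convPow_eq_self_of_mconv_self h n, h]

theorem convPow_succ_eq_zero_of_mconv_self_eq_zero {μ : Measure G} (h : μ ∗ₘ μ = 0) :
    ∀ n, convPow μ (n + 1) = 0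
  | 0 => h
  | n + 1 => by rw [convPow, convPow_succ_eq_zero_of_mconv_self_eq_zero h n, zero_mconv]

theorem tsum_ofReal_mul_geometric {t : ℝ} (ht₀ : 0 ≤ t) (ht₁ : t < 1) :
    ∑' n : ℕ, ENNReal.ofReal ((1 - t) * t ^ n) = 1 := by
  have hsum : Summable (fun n : ℕ ↦ (1 - t) * t ^ n) :=
    (summable_geometric_of_lt_one ht₀ ht₁).mul_left _
  rw [← ENNReal.ofReal_tsum_of_nonneg (fun n ↦ by nlinarith [pow_nonneg ht₀ n]) hsum,
    tsum_mul_left, tsum_geometric_of_lt_one ht₀ ht₁, mul_inv_cancel₀ (by linarith),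
    ENNReal.ofReal_one]

theorem Qt_eq_smul_add_smul_sum {t : ℝ} (ht : 0 ≤ t) (μ : Measure G) :
    Qt t μ = ENNReal.ofReal (1 - t) • μ + ENNReal.ofReal t •
      Measure.sum (fun n ↦ ENNReal.ofReal ((1 - t) * t ^ n) • convPow μ (n + 1)) := by
  ext s hs
  simp only [Qt, add_apply, Measure.smul_apply, sum_apply _ hs, smul_eq_mul]
  rw [tsum_eq_zero_add' ENNReal.summable, ← ENNReal.tsum_mul_left]
  congr 1
  · simp [convPow]
  · refine tsum_congr fun n ↦ ?_
    rw [← mul_assoc, ← ENNReal.ofReal_mul ht]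
    ring_nf

theorem Qt_mconv {t : ℝ} (μ : Measure G) [SFinite μ]
    (hmul : AEMeasurable (fun p : G × G ↦ p.1 * p.2) ((Qt t μ).prod μ)) :
    Qt t μ ∗ₘ μ =
      Measure.sum (fun n ↦ ENNReal.ofReal ((1 - t) * t ^ n) • convPow μ (n + 1)) := by
  rw [Qt, sum_mconv _ _ hmul]
  simp only [mconv_smul_left, convPow]

theorem Qt_eq_smul_add_smul_mconv {t : ℝ} (ht : 0 ≤ t) (μ : Measure G) [SFinite μ]
    (hmul : AEMeasurable (fun p : G × G ↦ p.1 * p.2) ((Qt t μ).prod μ)) :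
    Qt t μ = ENNReal.ofReal (1 - t) • μ + ENNReal.ofReal t • (Qt t μ ∗ₘ μ) := by
  rw [Qt_mconv μ hmul]
  exact Qt_eq_smul_add_smul_sum ht μ

theorem Qt_eq_smul_of_mconv_self_eq_zero {t : ℝ} (ht : 0 ≤ t) {μ : Measure G}
    (h : μ ∗ₘ μ = 0) : Qt t μ = ENNReal.ofReal (1 - t) • μ := by
  simp [Qt_eq_smul_add_smul_sum ht, convPow_succ_eq_zero_of_mconv_self_eq_zero h]

theorem Qt_eq_self_of_mconv_self {t : ℝ} (ht₀ : 0 ≤ t) (ht₁ : t < 1) {μ : Measure G}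
    (h : μ ∗ₘ μ = μ) : Qt t μ = μ := by
  simp_rw [Qt, convPow_eq_self_of_mconv_self h]
  rw [sum_smul_const, tsum_ofReal_mul_geometric ht₀ ht₁, one_smul]

end

theorem Qt_fixed_iff_idempotent_general {G : Type*} [CommGroup G] [MeasurableSpace G]
    (t : ℝ) (ht : t ∈ Set.Ioo (0 : ℝ) 1)
    (μ : Measure G) [IsProbabilityMeasure μ] :
    Qt t μ = μ ↔ μ.mconv μ = μ := by
  obtain ⟨ht₀, ht₁⟩ := ht
  have hab : ENNReal.ofReal (1 - t) + ENNReal.ofReal t = 1 := by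
    rw [← ENNReal.ofReal_add (by linarith) ht₀.le, sub_add_cancel, ENNReal.ofReal_one]
  have hb : ENNReal.ofReal t ≠ 0 := ENNReal.ofReal_ne_zero_iff.mpr ht₀
  refine ⟨fun h ↦ ?_, Qt_eq_self_of_mconv_self ht₀.le ht₁⟩
  by_cases hmul : AEMeasurable (fun p : G × G ↦ p.1 * p.2) (μ.prod μ)
  · refine eq_of_eq_smul_add_smul hab hb ?_
    calc μ = Qt t μ := h.symm
      _ = ENNReal.ofReal (1 - t) • μ + ENNReal.ofReal t • (Qt t μ ∗ₘ μ) :=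
        Qt_eq_smul_add_smul_mconv ht₀.le μ (by rwa [h])
      _ = ENNReal.ofReal (1 - t) • μ + ENNReal.ofReal t • (μ ∗ₘ μ) := by rw [h]
  · -- `mconv` is a pushforward, which is `0` along a map that is not a.e. measurable
    have hzero : μ ∗ₘ μ = 0 := map_of_not_aemeasurable hmul
    have hμ : (0 : Measure G) = μ := by
      refine eq_of_eq_smul_add_smul hab hb ?_
      rw [smul_zero, add_zero, ← Qt_eq_smul_of_mconv_self_eq_zero ht₀.le hzero, h]
    exact absurd hμ.symm (IsProbabilityMeasure.ne_zero μ)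

/-- For `t ∈ (0,1)`, a Borel probability measure `μ` on a compact Hausdorff
abelian topological group satisfies `Q_t(μ) = μ` if and only if `μ * μ = μ`: the fixed points
of `Q_t` are exactly the idempotent probability measures. -/
theorem Qt_fixed_iff_idempotent {G : Type*} [CommGroup G] [TopologicalSpace G]
    [IsTopologicalGroup G] [CompactSpace G] [T2Space G] [MeasurableSpace G] [BorelSpace G]
    (t : ℝ) (ht : t ∈ Set.Ioo (0 : ℝ) 1)
    (μ : Measure G) [IsProbabilityMeasure μ] :
    Qt t μ = μ ↔ μ.mconv μ = μ :=
  Qt_fixed_iff_idempotent_general t ht μ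
end

section
/- Let G be a finite abelian group of order n, let t ∈ [0,1), and let η = (1/n) Σ_{g∈G} δ_g ∈ ℝ[G] be the uniform probability (the main attractor, an idempotent). Consider the map F : x ↦ (1−t) x (1 − tx)^{-1}, defined on a neighborhood of η in ℝ[G] on which 1 − tx is invertible. Then the Fréchet derivative of F at η satisfies DF(η)(ν) = (1−t) ν for every ν ∈ ℝ[G] with Σ_{g∈G} ν(g) = 0. In particular the derivative of Q_t at the main attractor acts on the tangent space of P(G) as multiplication by the contraction factor 1−t. -/
/-!
With the ℓ¹ norm, `ℝ[G]` is a finite-dimensional, hence complete, normed algebra, so ring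
inversion is differentiable at units. If `e` is idempotent and `t ≠ 1`, then `1 - t e` is a unit
with inverse `w = 1 + t / (1 - t) e`, and the derivative of `x ↦ x (1 - t x)⁻¹` at `e` is
`v ↦ v w + t e w v w`; this is `v` as soon as `e v = v e = 0`. The uniform measure `η` is
idempotent and `η ν = ν η = (∑ ν) η`, so it annihilates every tangent vector of `P(G)`.
-/

/-- Identification of functions `G → ℝ` on a finite group with elements of the group algebra
`ℝ[G]`. -/
noncomputable def toMA {G : Type*} [CommGroup G] [Fintype G] (x : G → ℝ) :
    MonoidAlgebra ℝ G :=
  MonoidAlgebra.ofCoeff (Finsupp.equivFunOnFinite.symm x)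

/-- The rational map `x ↦ (1-t) x (1 - tx)⁻¹` of the group algebra `ℝ[G]`, transported to the
normed space of functions `G → ℝ` via the identification `ℝ[G] ≃ (G → ℝ)` for finite `G`
(convolution as multiplication). -/
noncomputable def F {G : Type*} [CommGroup G] [Fintype G] (t : ℝ) (x : G → ℝ) : G → ℝ :=
  fun g => ((1 - t) • (toMA x * Ring.inverse (1 - t • toMA x))).coeff g

open Finset

section Idempotent

variable {𝕜 R : Type*} [Field 𝕜] [Ring R] [Algebra 𝕜 R] {e : R}

theorem IsIdempotentElem.one_sub_smul_mul_one_add_smul (he : IsIdempotentElem e) {t : 𝕜}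
    (ht : t ≠ 1) : (1 - t • e) * (1 + (t / (1 - t)) • e) = 1 := by
  have hc : t / (1 - t) - t - t * (t / (1 - t)) = 0 := by
    field_simp [sub_ne_zero.mpr ht.symm]; ring
  simp only [sub_mul, mul_add, one_mul, mul_one, smul_mul_smul_comm, he.eq]
  linear_combination (norm := module) hc • e

theorem IsIdempotentElem.one_add_smul_mul_one_sub_smul (he : IsIdempotentElem e) {t : 𝕜}
    (ht : t ≠ 1) : (1 + (t / (1 - t)) • e) * (1 - t • e) = 1 := by
  have hc : t / (1 - t) - t - t * (t / (1 - t)) = 0 := by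
    field_simp [sub_ne_zero.mpr ht.symm]; ring
  simp only [mul_sub, add_mul, one_mul, mul_one, smul_mul_smul_comm, he.eq]
  linear_combination (norm := module) hc • e

end Idempotent

section Derivative

variable {𝕜 R : Type*} [NontriviallyNormedField 𝕜] [NormedRing R] [NormedAlgebra 𝕜 R]
  [HasSummableGeomSeries R]

theorem hasFDerivAt_mul_ringInverse_one_sub_smul (t : 𝕜) {a : R} (u : Rˣ)
    (hu : (u : R) = 1 - t • a) :
    ∃ D : R →L[𝕜] R, HasFDerivAt (fun x => x * Ring.inverse (1 - t • x)) D a ∧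
      ∀ v, D v = v * ↑u⁻¹ + t • (a * (↑u⁻¹ * v * ↑u⁻¹)) := by
  have hlin : HasFDerivAt (fun x : R => 1 - t • x) (-(t • ContinuousLinearMap.id 𝕜 R)) a :=
    ((hasFDerivAt_id a).const_smul t).const_sub 1
  have hinv := hasFDerivAt_ringInverse (𝕜 := 𝕜) u
  rw [hu] at hinv
  have hinv' : HasFDerivAt (fun x : R => Ring.inverse (1 - t • x)) _ a :=
    HasFDerivAt.comp (g := Ring.inverse) a hinv hlin
  refine ⟨_, (hasFDerivAt_id a).mul' hinv', fun v => ?_⟩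
  simp [hu ▸ Ring.inverse_unit u, add_comm]

theorem IsIdempotentElem.hasFDerivAt_mul_ringInverse_one_sub_smul {e : R}
    (he : IsIdempotentElem e) {t : 𝕜} (ht : t ≠ 1) :
    ∃ D : R →L[𝕜] R, HasFDerivAt (fun x => x * Ring.inverse (1 - t • x)) D e ∧
      ∀ v, e * v = 0 → v * e = 0 → D v = v := by
  set w := 1 + (t / (1 - t)) • e
  let u : Rˣ := ⟨1 - t • e, w, he.one_sub_smul_mul_one_add_smul ht,
    he.one_add_smul_mul_one_sub_smul ht⟩
  obtain ⟨D, hD, hDv⟩ := _root_.hasFDerivAt_mul_ringInverse_one_sub_smul t u rfl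
  refine ⟨D, hD, fun v hev hve => ?_⟩
  have hvw : v * w = v := by simp [w, mul_add, hve]
  have hew : e * w = (1 + t / (1 - t)) • e := by simp [w, mul_add, he.eq, add_smul]
  rw [hDv]
  show v * w + t • (e * (w * v * w)) = v
  rw [← mul_assoc, ← mul_assoc, hew, smul_mul_assoc, smul_mul_assoc, hev]
  simp [hvw]

end Derivative

namespace MonoidAlgebra

section Fintype

variable {G : Type*} [Fintype G]

noncomputable def l1Norm : AddGroupNorm (MonoidAlgebra ℝ G) where
  toFun x := ∑ g, |x.coeff g|
  map_zero' := by simp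
  add_le' x y :=
    (sum_le_sum fun g _ => abs_add_le (x.coeff g) (y.coeff g)).trans_eq sum_add_distrib
  neg' x := by simp
  eq_zero_of_map_eq_zero' x hx := by
    ext g
    simpa using (sum_eq_zero_iff_of_nonneg fun g _ => abs_nonneg (x.coeff g)).mp hx g (mem_univ g)

noncomputable instance : NormedAddCommGroup (MonoidAlgebra ℝ G) := l1Norm.toNormedAddCommGroup

theorem norm_def (x : MonoidAlgebra ℝ G) : ‖x‖ = ∑ g, |x.coeff g| := rfl

noncomputable instance : NormedSpace ℝ (MonoidAlgebra ℝ G) where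
  norm_smul_le c x := by simp [norm_def, abs_mul, mul_sum]

noncomputable def ofFunCLE : (G → ℝ) ≃L[ℝ] MonoidAlgebra ℝ G :=
  ((Finsupp.linearEquivFunOnFinite ℝ ℝ G).symm.trans
    (coeffLinearEquiv ℝ).symm).toContinuousLinearEquiv

@[simp]
theorem coeff_ofFunCLE (x : G → ℝ) (g : G) : (ofFunCLE x).coeff g = x g := rfl

noncomputable def uniform (G : Type*) [Fintype G] : MonoidAlgebra ℝ G :=
  ofFunCLE fun _ => (Fintype.card G : ℝ)⁻¹

end Fintype

section Group

variable {G : Type*} [Group G] [Fintype G]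

theorem coeff_mul_eq_sum_left (x y : MonoidAlgebra ℝ G) (g : G) :
    (x * y).coeff g = ∑ h, x.coeff h * y.coeff (h⁻¹ * g) := by
  rw [coeff_mul_apply_left, Finsupp.sum_fintype _ _ fun _ => zero_mul _]

theorem coeff_mul_eq_sum_right (x y : MonoidAlgebra ℝ G) (g : G) :
    (x * y).coeff g = ∑ h, x.coeff (g * h⁻¹) * y.coeff h := by
  rw [coeff_mul_apply_right, Finsupp.sum_fintype _ _ fun _ => mul_zero _]

noncomputable instance : NormedRing (MonoidAlgebra ℝ G) where
  dist_eq _ _ := rfl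
  norm_mul_le x y := by
    rw [norm_def, norm_def, norm_def, sum_mul_sum]
    calc ∑ g, |(x * y).coeff g| ≤ ∑ g, ∑ h, |x.coeff h| * |y.coeff (h⁻¹ * g)| :=
          sum_le_sum fun g _ => by
            simpa only [coeff_mul_eq_sum_left, abs_mul] using
              abs_sum_le_sum_abs (fun h => x.coeff h * y.coeff (h⁻¹ * g)) univ
      _ = ∑ h, ∑ g, |x.coeff h| * |y.coeff (h⁻¹ * g)| := sum_comm
      _ = ∑ h, ∑ g, |x.coeff h| * |y.coeff g| := sum_congr rfl fun h _ =>
          Fintype.sum_equiv (Equiv.mulLeft h⁻¹) _ _ fun _ => rfl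

noncomputable instance : NormedAlgebra ℝ (MonoidAlgebra ℝ G) where
  norm_smul_le := norm_smul_le

theorem uniform_mul (x : MonoidAlgebra ℝ G) :
    uniform G * x = (∑ g, x.coeff g) • uniform G := by
  ext g
  rw [coeff_mul_eq_sum_left]
  simp only [uniform, coeff_ofFunCLE, coeff_smul, ← mul_sum]
  rw [mul_comm]
  congr 1
  exact Fintype.sum_equiv ((Equiv.inv G).trans (Equiv.mulRight g)) _ _ fun _ => rfl

theorem mul_uniform (x : MonoidAlgebra ℝ G) :
    x * uniform G = (∑ g, x.coeff g) • uniform G := by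
  ext g
  rw [coeff_mul_eq_sum_right]
  simp only [uniform, coeff_ofFunCLE, coeff_smul, ← sum_mul]
  congr 1
  exact Fintype.sum_equiv ((Equiv.inv G).trans (Equiv.mulLeft g)) _ _ fun _ => rfl

theorem isIdempotentElem_uniform : IsIdempotentElem (uniform G) := by
  rw [IsIdempotentElem, uniform_mul]
  simp [uniform]

end Group

end MonoidAlgebra

open MonoidAlgebra in
/-- Let `G` be a finite abelian group of order `n`, `t ∈ [0,1)`, and
`η = (1/n) Σ_g δ_g` the uniform probability (the main attractor, an idempotent). Then the map
`F : x ↦ (1-t) x (1 - tx)⁻¹` has a Fréchet derivative at `η` which acts as multiplication by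
the contraction factor `1 - t` on every tangent vector `ν` with `Σ_g ν(g) = 0`. -/
theorem frechet_derivative_at_uniform {G : Type*} [CommGroup G] [Fintype G]
    (t : ℝ) (ht : t ∈ Set.Ico (0 : ℝ) 1) :
    ∃ D : (G → ℝ) →L[ℝ] (G → ℝ),
      HasFDerivAt (F t) D (fun _ : G => ((Fintype.card G : ℝ))⁻¹) ∧
      ∀ ν : G → ℝ, ∑ g : G, ν g = 0 → D ν = (1 - t) • ν := by
  set η : G → ℝ := fun _ => (Fintype.card G : ℝ)⁻¹
  obtain ⟨D, hD, hDv⟩ :=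
    (isIdempotentElem_uniform (G := G)).hasFDerivAt_mul_ringInverse_one_sub_smul ht.2.ne
  have hF : HasFDerivAt (𝕜 := ℝ) (F t) _ η :=
    (ofFunCLE (G := G)).symm.hasFDerivAt.comp η
      ((hD.const_smul (1 - t)).comp η (ofFunCLE (G := G)).hasFDerivAt)
  refine ⟨_, hF, fun ν hν => ?_⟩
  have hνη : ofFunCLE ν * uniform G = 0 := by simp [mul_uniform, hν]
  simp [hDv _ (by rwa [mul_comm]) hνη]
end
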